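/- arXiv:2506.18539 — 5 statements merged into one kernel-verified Lean document; each statement's English description precedes it below -/
import Mathlib

section
/- Consider a billiard trajectory between two unit spheres with N collisions as in the context. If ⟨p₁,n⟩ ≥ 0 and ⟨w₁,n⟩ ≥ 0, then the sequence n_k = ⟨w_k, n⟩ is monotone nondecreasing in k (i.e. n_{k} ≥ n_{k−1} for all 2 ≤ k ≤ N), and moreover h_k = ⟨p_k,n⟩ ≥ 0 for all 1 ≤ k ≤ N. -/
open scoped RealInnerProductSpace

noncomputable abbrev E3 : Type := EuclideanSpace ℝ (Fin 3)

/-- For a billiard trajectory between two unit spheres, if `h₁ ≥ 0` and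
`n₁ ≥ 0` then the velocity component `n_k = ⟪w_k, n⟫` along `n` is monotone nondecreasing,
and the height `h_k = ⟪p_k, n⟫` stays nonnegative. -/
theorem billiard_monotone_normal_component
    (a b : E3) (N : ℕ)
    (p w : ℕ → E3) (τ : ℕ → ℝ)
    (c : ℕ → E3) (hc : ∀ k, c k = if k % 2 = 1 then a else b)
    (hspeed : ∀ k, 1 ≤ k → k ≤ N → ‖w k‖ = 1)
    (hhit : ∀ k, 1 ≤ k → k ≤ N → ‖p k - c k‖ = 1)
    (hτmono : ∀ k, 1 ≤ k → k + 1 ≤ N → τ k ≤ τ (k + 1))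
    (hfree : ∀ k, 1 ≤ k → k + 1 ≤ N → p (k + 1) = p k + (τ (k + 1) - τ k) • w k)
    (hrefl : ∀ k, 1 ≤ k → k + 1 ≤ N →
      w (k + 1) = w k - (2 * ⟪p (k + 1) - c (k + 1), w k⟫) • (p (k + 1) - c (k + 1)))
    (houtside : ∀ k, 1 ≤ k → k + 1 ≤ N → ⟪p (k + 1) - c (k + 1), w k⟫ ≤ 0)
    (n : E3) (hn : ‖n‖ = 1) (hna : ⟪n, a⟫ = 0) (hnb : ⟪n, b⟫ = 0)
    (hh1 : 0 ≤ ⟪p 1, n⟫) (hn1 : 0 ≤ ⟪w 1, n⟫) :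
    (∀ k, 2 ≤ k → k ≤ N → ⟪w (k - 1), n⟫ ≤ ⟪w k, n⟫) ∧
    (∀ k, 1 ≤ k → k ≤ N → 0 ≤ ⟪p k, n⟫) := by
  have hcn : ∀ k, ⟪c k, n⟫ = 0 := by
    intro k
    rw [hc k]
    split
    · rw [real_inner_comm]; exact hna
    · rw [real_inner_comm]; exact hnb
  -- key single step
  have step : ∀ k, 1 ≤ k → k + 1 ≤ N → 0 ≤ ⟪p k, n⟫ → 0 ≤ ⟪w k, n⟫ →
      (0 ≤ ⟪p (k + 1), n⟫ ∧ ⟪w k, n⟫ ≤ ⟪w (k + 1), n⟫) := by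
    intro k hk1 hkN hp hw
    have hpn : 0 ≤ ⟪p (k + 1), n⟫ := by
      rw [hfree k hk1 hkN, inner_add_left, real_inner_smul_left]
      have := hτmono k hk1 hkN
      have : 0 ≤ (τ (k + 1) - τ k) * ⟪w k, n⟫ := mul_nonneg (by linarith) hw
      linarith
    refine ⟨hpn, ?_⟩
    have hVn : ⟪p (k + 1) - c (k + 1), n⟫ = ⟪p (k + 1), n⟫ := by
      rw [inner_sub_left, hcn (k + 1)]; ring
    rw [hrefl k hk1 hkN, inner_sub_left, real_inner_smul_left, hVn]
    have hout := houtside k hk1 hkN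
    nlinarith
  have main : ∀ k, 1 ≤ k → k ≤ N → 0 ≤ ⟪p k, n⟫ ∧ 0 ≤ ⟪w k, n⟫ := by
    intro k hk1
    induction k with
    | zero => omega
    | succ m ih =>
      intro hkN
      rcases Nat.eq_or_lt_of_le hk1 with h1 | h1
      · have : m = 0 := by omega
        subst this
        exact ⟨hh1, hn1⟩
      · have hm1 : 1 ≤ m := by omega
        have hmN : m + 1 ≤ N := hkN
        obtain ⟨hp, hw⟩ := ih (by omega) (by omega)
        obtain ⟨h1, h2⟩ := step m hm1 hmN hp hw
        exact ⟨h1, le_trans hw h2⟩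
  constructor
  · intro k hk2 hkN
    obtain ⟨m, rfl⟩ : ∃ m, k = m + 1 := ⟨k - 1, by omega⟩
    have hm1 : 1 ≤ m := by omega
    obtain ⟨hp, hw⟩ := main m hm1 (by omega)
    simpa using (step m hm1 hkN hp hw).2
  · intro k hk1 hkN
    exact (main k hk1 hkN).1
end

section
/- Let e = (1,0,0), let r > 0 and ξ > 0, and let u, v be unit vectors in ℝ³ with u ≠ e. If there exists t ≥ 0 such that ‖ξ·u + r·(u−e)/‖u−e‖ + t·v‖ < r, then ‖u × v‖ ≤ 2r/ξ (i.e. the sine of the angle between u and v is at most 2r/ξ). -/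
open scoped RealInnerProductSpace

/-- The cross product on `ℝ³` realised as `EuclideanSpace ℝ (Fin 3)`. -/
noncomputable def cross (u v : E3) : E3 :=
  WithLp.toLp 2 ![u 1 * v 2 - u 2 * v 1, u 2 * v 0 - u 0 * v 2, u 0 * v 1 - u 1 * v 0]

/-- If `(u, ξ, v)` is a direct recollision event for scatterers of radius
`r`, i.e. the particle moving from `ξ·u + r·(u-e)/‖u-e‖` with velocity `v` re-enters the
ball of radius `r` around the first scatterer centre, then the sine of the angle between
`u` and `v` satisfies `‖u × v‖ ≤ 2r/ξ`. -/
theorem recollision_angle_bound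
    (e u v : E3) (he : e = WithLp.toLp 2 ![1, 0, 0])
    (hu : ‖u‖ = 1) (hv : ‖v‖ = 1) (hue : u ≠ e)
    (r ξ : ℝ) (hr : 0 < r) (hξ : 0 < ξ)
    (hrecoll : ∃ t : ℝ, 0 ≤ t ∧ ‖ξ • u + (r * ‖u - e‖⁻¹) • (u - e) + t • v‖ < r) :
    ‖cross u v‖ ≤ 2 * r / ξ := by
  obtain ⟨t, ht, hlt⟩ := hrecoll
  have hune : u - e ≠ 0 := sub_ne_zero.mpr hue
  have hnorm_pos : 0 < ‖u - e‖ := norm_pos_iff.mpr hune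
  set w : E3 := (r * ‖u - e‖⁻¹) • (u - e) with hw
  have hwn : ‖w‖ = r := by
    rw [hw, norm_smul, Real.norm_eq_abs, abs_of_pos (by positivity)]
    field_simp
  have key : ‖ξ • u + t • v‖ < 2 * r := by
    have h1 : ‖ξ • u + t • v‖ ≤ ‖ξ • u + w + t • v‖ + ‖w‖ := by
      have h2 : ξ • u + t • v = (ξ • u + w + t • v) - w := by abel
      rw [h2]; exact norm_sub_le _ _
    rw [hwn] at h1
    linarith
  set c : ℝ := inner ℝ u v with hc
  have hu2 : (inner ℝ u u : ℝ) = 1 := by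
    rw [real_inner_self_eq_norm_sq, hu]; norm_num
  have hv2 : (inner ℝ v v : ℝ) = 1 := by
    rw [real_inner_self_eq_norm_sq, hv]; norm_num
  have hcross : ‖cross u v‖ ^ 2 = 1 - c ^ 2 := by
    rw [← real_inner_self_eq_norm_sq]
    simp only [hc, PiLp.inner_apply, RCLike.inner_apply, conj_trivial,
      Fin.sum_univ_three] at hu2 hv2 ⊢
    simp only [cross, Matrix.cons_val_zero, Matrix.cons_val_one, Matrix.head_cons,
      Matrix.cons_val_two, Matrix.tail_cons]
    nlinarith [hu2, hv2]
  have hexp : ‖ξ • u + t • v‖ ^ 2 = ξ ^ 2 + 2 * ξ * t * c + t ^ 2 := by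
    rw [← real_inner_self_eq_norm_sq, real_inner_add_add_self]
    simp only [real_inner_smul_left, real_inner_smul_right, hu2, hv2, ← hc]
    ring
  have hsq : (ξ * ‖cross u v‖) ^ 2 ≤ ‖ξ • u + t • v‖ ^ 2 := by
    rw [hexp, mul_pow, hcross]
    nlinarith [sq_nonneg (t + ξ * c)]
  have hnn : 0 ≤ ξ * ‖cross u v‖ := by positivity
  have hNnn : 0 ≤ ‖ξ • u + t • v‖ := norm_nonneg _
  have hfin : ξ * ‖cross u v‖ < 2 * r := by
    have h := Real.sqrt_le_sqrt hsq
    rw [Real.sqrt_sq hnn, Real.sqrt_sq hNnn] at h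
    linarith
  rw [le_div_iff₀ hξ]
  linarith [hfin]
end

section
/- Let w and V be unit vectors in ℝ³, set w' = w − 2⟨V, w⟩·V, and assume ⟨V, w⟩ ≤ 0. If there exist T, T' ≥ 8 with ‖T·w + T'·w'‖ ≤ 2, then ⟨V, w⟩ ≤ −7/8. -/
open scoped RealInnerProductSpace

/-- Let `w, V` be unit vectors in `ℝ³`, let `w' = w - 2⟪V,w⟫·V` be the
elastic reflection of `w` with outward normal `V`, and suppose `⟪V, w⟫ ≤ 0`. If two
consecutive free flights of lengths `T, T' ≥ 8` return to the same unit sphere, i.e.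
`‖T·w + T'·w'‖ ≤ 2`, then `⟪V, w⟫ ≤ -7/8`. -/
theorem reflection_return_inner_bound
    (w V : E3) (hw : ‖w‖ = 1) (hV : ‖V‖ = 1)
    (w' : E3) (hw' : w' = w - (2 * ⟪V, w⟫) • V)
    (hneg : ⟪V, w⟫ ≤ 0)
    (hreturn : ∃ T T' : ℝ, 8 ≤ T ∧ 8 ≤ T' ∧ ‖T • w + T' • w'‖ ≤ 2) :
    ⟪V, w⟫ ≤ -(7 / 8) := by
  obtain ⟨T, T', hT, hT', hret⟩ := hreturn
  set c : ℝ := ⟪V, w⟫ with hc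
  have hww : ⟪w, w⟫ = 1 := by
    rw [real_inner_self_eq_norm_mul_norm, hw]; ring
  have hVV : ⟪V, V⟫ = 1 := by
    rw [real_inner_self_eq_norm_mul_norm, hV]; ring
  have hwV : ⟪w, V⟫ = c := (real_inner_comm w V).symm
  have hsq : ‖T • w + T' • w'‖ ^ 2 ≤ 4 := by
    nlinarith [norm_nonneg (T • w + T' • w')]
  have hexp : ‖T • w + T' • w'‖ ^ 2
      = T ^ 2 + T' ^ 2 + 2 * T * T' * (1 - 2 * c ^ 2) := by
    have : ‖T • w + T' • w'‖ ^ 2 = ⟪T • w + T' • w', T • w + T' • w'⟫ := by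
      rw [real_inner_self_eq_norm_mul_norm]; ring
    rw [this, hw']
    simp only [inner_add_left, inner_add_right, inner_sub_left, inner_sub_right,
      real_inner_smul_left, real_inner_smul_right, hww, hVV, hwV, ← hc]
    ring
  have hTT : (64:ℝ) ≤ T * T' := by nlinarith
  have hc1 : c ^ 2 ≤ 1 := by
    have := abs_real_inner_le_norm V w
    rw [hw, hV] at this
    nlinarith [abs_nonneg c, sq_abs c, this]
  have hkey : 63 / 64 ≤ c ^ 2 := by
    nlinarith [sq_nonneg (T - T'), hTT, hc1,
      mul_nonneg (show (0:ℝ) ≤ T * T' - 64 by linarith)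
        (show (0:ℝ) ≤ 1 - c ^ 2 by linarith)]
  nlinarith [hkey]
end

section
/- Let e = (1,0,0) and let λ = Uni(S²) ⊗ Leb ⊗ Uni(S²) on S² × [0,∞) × S². There exists a constant C > 0 such that for all s > 0: λ({(u, h, v) : h ≥ 10, ‖u × v‖ ≤ 2/h, and (1 + h/2)·|⟨e, u × v⟩| ≤ 4/s}) ≤ C/(1+s). -/
open MeasureTheory
open scoped RealInnerProductSpace

/-- The unit sphere `S²` in `ℝ³`. -/
abbrev S2 : Set E3 := Metric.sphere (0 : E3) 1

/-- The (unnormalised) surface measure on the unit sphere `S² ⊂ ℝ³`. -/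
noncomputable def sphereVol : Measure ↥S2 := (volume : Measure E3).toSphere

/-- The uniform probability measure on the unit sphere `S² ⊂ ℝ³`. -/
noncomputable def uniSphere : Measure ↥S2 := (sphereVol Set.univ)⁻¹ • sphereVol

/-- The measure `λ = Uni(S²) ⊗ Leb ⊗ Uni(S²)` on `S² × [0,∞) × S²`. -/
noncomputable def lambdaMeasure : Measure (↥S2 × ℝ × ↥S2) :=
  uniSphere.prod ((volume.restrict (Set.Ici (0 : ℝ))).prod uniSphere)

/-- The first coordinate unit vector `e = (1,0,0)` in `ℝ³`. -/
noncomputable def e3 : E3 := WithLp.toLp 2 ![1, 0, 0]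

open Set Metric
open scoped Pointwise ENNReal NNReal

lemma inner3 (x y : E3) : ⟪x, y⟫ = x 0 * y 0 + x 1 * y 1 + x 2 * y 2 := by
  simp [PiLp.inner_apply, Fin.sum_univ_three]
  ring

lemma normsq3 (x : E3) : ‖x‖ ^ 2 = x 0 ^ 2 + x 1 ^ 2 + x 2 ^ 2 := by
  rw [← real_inner_self_eq_norm_sq, inner3]; ring

lemma cross_apply0 (u v : E3) : cross u v 0 = u 1 * v 2 - u 2 * v 1 := rfl
lemma cross_apply1 (u v : E3) : cross u v 1 = u 2 * v 0 - u 0 * v 2 := rfl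
lemma cross_apply2 (u v : E3) : cross u v 2 = u 0 * v 1 - u 1 * v 0 := rfl
lemma e3_0 : e3 0 = 1 := rfl
lemma e3_1 : e3 1 = 0 := rfl
lemma e3_2 : e3 2 = 0 := rfl

noncomputable def eY : E3 := WithLp.toLp 2 ![0, 1, 0]
lemma eY_0 : eY 0 = 0 := rfl
lemma eY_1 : eY 1 = 1 := rfl
lemma eY_2 : eY 2 = 0 := rfl
lemma eY_norm : ‖eY‖ = 1 := by
  have : ‖eY‖^2 = 1 := by rw [normsq3]; simp [eY_0, eY_1, eY_2]
  nlinarith [norm_nonneg eY]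

lemma triple (u v : E3) : ⟪e3, cross u v⟫ = ⟪cross e3 u, v⟫ := by
  simp only [inner3, cross_apply0, cross_apply1, cross_apply2, e3_0, e3_1, e3_2]; ring

lemma lagrange (u x : E3) : ‖cross u x‖ ^ 2 = ‖u‖^2 * ‖x‖^2 - ⟪u, x⟫ ^ 2 := by
  simp only [normsq3, inner3, cross_apply0, cross_apply1, cross_apply2]; ring

lemma inner_cross_self (u q : E3) : ⟪u, cross u q⟫ = 0 := by
  simp only [inner3, cross_apply0, cross_apply1, cross_apply2]; ring

lemma inner_cross_right (u q : E3) : ⟪cross u q, q⟫ = 0 := by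
  simp only [inner3, cross_apply0, cross_apply1, cross_apply2]; ring

lemma e3_norm : ‖e3‖ = 1 := by
  have : ‖e3‖^2 = 1 := by rw [normsq3]; simp [e3_0, e3_1, e3_2]
  nlinarith [norm_nonneg e3]

lemma continuous_cross (u : E3) : Continuous fun v : E3 => cross u v := by
  unfold cross
  apply (PiLp.continuous_toLp 2 _).comp
  apply continuous_pi
  intro i
  fin_cases i <;> simp <;> fun_prop

set_option maxHeartbeats 1000000 in
lemma bessel2 (u p v : E3) (hu : ‖u‖ = 1) (hp : ‖p‖ = 1) (hup : ⟪u, p⟫ = 0) :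
    ⟪u, v⟫ ^ 2 + ⟪p, v⟫ ^ 2 ≤ ‖v‖ ^ 2 := by
  have hu2 : u 0^2+u 1^2+u 2^2 = 1 := by rw [← normsq3, hu]; norm_num
  have hp2 : p 0^2+p 1^2+p 2^2 = 1 := by rw [← normsq3, hp]; norm_num
  have hup2 : u 0*p 0+u 1*p 1+u 2*p 2 = 0 := by rw [← inner3]; exact hup
  have g1 : ⟪u, v⟫ = u 0*v 0+u 1*v 1+u 2*v 2 := by rw [inner3]
  have g2 : ⟪p, v⟫ = p 0*v 0+p 1*v 1+p 2*v 2 := by rw [inner3]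
  have e1 : (u 0*v 0+u 1*v 1+u 2*v 2)^2*(u 0^2+u 1^2+u 2^2) = (u 0*v 0+u 1*v 1+u 2*v 2)^2 := by
    rw [hu2]; ring
  have e2 : (p 0*v 0+p 1*v 1+p 2*v 2)^2*(p 0^2+p 1^2+p 2^2) = (p 0*v 0+p 1*v 1+p 2*v 2)^2 := by
    rw [hp2]; ring
  have e3' : ((u 0*v 0+u 1*v 1+u 2*v 2)*(p 0*v 0+p 1*v 1+p 2*v 2))*(u 0*p 0+u 1*p 1+u 2*p 2) = 0 := by
    rw [hup2]; ring
  rw [g1, g2, normsq3]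
  linarith [sq_nonneg (v 0 - (u 0*v 0+u 1*v 1+u 2*v 2)*u 0 - (p 0*v 0+p 1*v 1+p 2*v 2)*p 0),
    sq_nonneg (v 1 - (u 0*v 0+u 1*v 1+u 2*v 2)*u 1 - (p 0*v 0+p 1*v 1+p 2*v 2)*p 1),
    sq_nonneg (v 2 - (u 0*v 0+u 1*v 1+u 2*v 2)*u 2 - (p 0*v 0+p 1*v 1+p 2*v 2)*p 2),
    e1, e2, e3']

lemma my_abs_le (a b : ℝ) (h : a^2 ≤ b^2) (hb : 0 ≤ b) : |a| ≤ b := by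
  nlinarith [abs_nonneg a, sq_abs a]

lemma exists_onb (u p q : E3) (hu : ‖u‖ = 1) (hp : ‖p‖ = 1) (hq : ‖q‖ = 1)
    (hup : ⟪u, p⟫ = 0) (huq : ⟪u, q⟫ = 0) (hpq : ⟪p, q⟫ = 0) :
    ∃ B : OrthonormalBasis (Fin 3) ℝ E3, B 0 = u ∧ B 1 = p ∧ B 2 = q := by
  set w : Fin 3 → E3 := ![u, p, q] with hw
  have hon : Orthonormal ℝ w := by
    constructor
    · intro i
      fin_cases i <;>
        simp only [hw, Matrix.cons_val_zero, Matrix.cons_val_one, Matrix.cons_val_two,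
          Matrix.head_cons, Matrix.tail_cons] <;> assumption
    · intro i j hij
      fin_cases i <;> fin_cases j <;>
        simp only [hw, Matrix.cons_val_zero, Matrix.cons_val_one, Matrix.cons_val_two,
          Matrix.head_cons, Matrix.tail_cons] <;>
        first
          | exact absurd rfl hij
          | assumption
          | (rw [real_inner_comm]; assumption)
  have hcard : Fintype.card (Fin 3) = Module.finrank ℝ E3 := by
    simp [finrank_euclideanSpace_fin]
  have hsp : ⊤ ≤ Submodule.span ℝ (Set.range w) := by
    rw [← coe_basisOfLinearIndependentOfCardEqFinrank hon.linearIndependent hcard]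
    exact (basisOfLinearIndependentOfCardEqFinrank hon.linearIndependent hcard).span_eq.ge
  refine ⟨OrthonormalBasis.mk hon hsp, ?_, ?_, ?_⟩ <;>
    simp [OrthonormalBasis.coe_mk, hw]

lemma slabVolume (B : OrthonormalBasis (Fin 3) ℝ E3) (a b c : ℝ) :
    volume {x : E3 | |⟪B 0, x⟫| ≤ a ∧ |⟪B 1, x⟫| ≤ b ∧ |⟪B 2, x⟫| ≤ c}
      = ENNReal.ofReal (2*a) * ENNReal.ofReal (2*b) * ENNReal.ofReal (2*c) := by
  have h2 : {y : EuclideanSpace ℝ (Fin 3) | |y 0| ≤ a ∧ |y 1| ≤ b ∧ |y 2| ≤ c}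
      = (MeasurableEquiv.toLp 2 (Fin 3 → ℝ)).symm ⁻¹'
        (Set.univ.pi fun i => Icc (-(![a,b,c] i)) (![a,b,c] i)) := by
    ext y
    simp only [mem_setOf_eq, mem_preimage, MeasurableEquiv.coe_toLp_symm,
      mem_univ_pi, mem_Icc, ← abs_le]
    constructor
    · rintro ⟨h0, h1, h2⟩ i
      fin_cases i <;> simpa
    · intro h
      exact ⟨by simpa using h 0, by simpa using h 1, by simpa using h 2⟩
  have hmpi : MeasurableSet (Set.univ.pi fun i => Icc (-(![a,b,c] i)) (![a,b,c] i)) :=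
    MeasurableSet.univ_pi fun i => measurableSet_Icc
  have hm : MeasurableSet {y : EuclideanSpace ℝ (Fin 3) | |y 0| ≤ a ∧ |y 1| ≤ b ∧ |y 2| ≤ c} := by
    rw [h2]; exact (MeasurableEquiv.toLp 2 (Fin 3 → ℝ)).symm.measurable hmpi
  have h1 : {x : E3 | |⟪B 0, x⟫| ≤ a ∧ |⟪B 1, x⟫| ≤ b ∧ |⟪B 2, x⟫| ≤ c}
      = B.repr ⁻¹' {y : EuclideanSpace ℝ (Fin 3) | |y 0| ≤ a ∧ |y 1| ≤ b ∧ |y 2| ≤ c} := by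
    ext x
    simp [B.repr_apply_apply]
  rw [h1, B.measurePreserving_repr.measure_preimage hm.nullMeasurableSet, h2,
    (EuclideanSpace.volume_preserving_symm_measurableEquiv_toLp (Fin 3)).measure_preimage
      hmpi.nullMeasurableSet, volume_pi_pi, Fin.prod_univ_three]
  simp [Real.volume_Icc]
  ring_nf
  rw [ENNReal.ofReal_mul' (by norm_num : (0:ℝ) ≤ 2), ENNReal.ofReal_mul' (by norm_num : (0:ℝ) ≤ 2),
    ENNReal.ofReal_mul' (by norm_num : (0:ℝ) ≤ 2)]
  simp only [ENNReal.ofReal_ofNat]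
  ring

lemma ball_vol_ge : 1 ≤ volume (Metric.ball (0:E3) 1) := by
  set B : OrthonormalBasis (Fin 3) ℝ E3 := EuclideanSpace.basisFun (Fin 3) ℝ with hB
  have hBx : ∀ (i : Fin 3) (x : E3), ⟪B i, x⟫ = x i := by
    intro i x
    rw [← B.repr_apply_apply x i, hB]
    rfl
  have hcube := slabVolume B (1/2) (1/2) (1/2)
  have hsub : {x : E3 | |⟪B 0, x⟫| ≤ 1/2 ∧ |⟪B 1, x⟫| ≤ 1/2 ∧ |⟪B 2, x⟫| ≤ 1/2}
      ⊆ Metric.ball (0:E3) 1 := by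
    intro x hx
    obtain ⟨h0, h1, h2⟩ := hx
    rw [hBx 0 x] at h0
    rw [hBx 1 x] at h1
    rw [hBx 2 x] at h2
    rw [mem_ball_zero_iff]
    have hn := normsq3 x
    have a0 := abs_le.mp h0
    have a1 := abs_le.mp h1
    have a2 := abs_le.mp h2
    nlinarith [norm_nonneg x]
  calc (1:ℝ≥0∞) = ENNReal.ofReal (2*(1/2)) * ENNReal.ofReal (2*(1/2)) * ENNReal.ofReal (2*(1/2)) := by
        norm_num
    _ = _ := hcube.symm
    _ ≤ volume (Metric.ball (0:E3) 1) := measure_mono hsub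

lemma uniSphere_le_of_cone (s : Set ↥S2) (hs : MeasurableSet s) (W : ℝ≥0∞)
    (hW : volume (Ioo (0:ℝ) 1 • (Subtype.val '' s)) ≤ W) : uniSphere s ≤ W := by
  have hdim : (Module.finrank ℝ E3) = 3 := finrank_euclideanSpace_fin
  have h1 : sphereVol s = 3 * volume (Ioo (0:ℝ) 1 • (Subtype.val '' s)) := by
    rw [sphereVol, Measure.toSphere_apply' _ hs, hdim]
    norm_num
  have h2 : sphereVol univ = 3 * volume (Metric.ball (0:E3) 1) := by
    rw [sphereVol, Measure.toSphere_apply_univ, hdim]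
    norm_num
  have h3 : uniSphere s = (sphereVol univ)⁻¹ * sphereVol s := by
    rw [uniSphere, Measure.smul_apply, smul_eq_mul]
  rw [h3, h1, h2]
  set V := volume (Metric.ball (0:E3) 1)
  set W0 := volume (Ioo (0:ℝ) 1 • (Subtype.val '' s))
  have hre : (3 * V)⁻¹ * (3 * W0) = (3⁻¹ * 3) * (V⁻¹ * W0) := by
    rw [ENNReal.mul_inv (Or.inl (by norm_num)) (Or.inl (by norm_num))]
    ring
  rw [hre, ENNReal.inv_mul_cancel (by norm_num) (by norm_num), one_mul]
  calc V⁻¹ * W0 ≤ 1 * W0 := mul_le_mul_left (ENNReal.inv_le_one.2 ball_vol_ge) W0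
    _ = W0 := one_mul _
    _ ≤ W := hW

lemma master (u q : E3) (hu : ‖u‖ = 1) (hq : ‖q‖ = 1) (huq : ⟪u, q⟫ = 0) (r m : ℝ) :
    uniSphere {v : ↥S2 | ‖cross u (v:E3)‖ ≤ r ∧ |⟪q, (v:E3)⟫| ≤ m}
      ≤ ENNReal.ofReal (8 * (r * m)) := by
  set s := {v : ↥S2 | ‖cross u (v:E3)‖ ≤ r ∧ |⟪q, (v:E3)⟫| ≤ m} with hsdef
  have hcont1 : Continuous fun v : ↥S2 => ‖cross u (v:E3)‖ :=
    ((continuous_cross u).comp continuous_subtype_val).norm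
  have hcont2 : Continuous fun v : ↥S2 => ⟪q, (v:E3)⟫ :=
    Continuous.inner continuous_const continuous_subtype_val
  have hs : MeasurableSet s := by
    apply MeasurableSet.inter
    · exact measurableSet_le hcont1.measurable measurable_const
    · exact measurableSet_le hcont2.abs.measurable measurable_const
  rcases eq_empty_or_nonempty s with he | ⟨v0, hv0⟩
  · rw [he]; simp
  have hr0 : (0:ℝ) ≤ r := le_trans (norm_nonneg _) hv0.1
  have hm0 : (0:ℝ) ≤ m := le_trans (abs_nonneg _) hv0.2
  set p := cross u q with hpdef
  have hp : ‖p‖ = 1 := by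
    have hl := lagrange u q
    rw [hu, hq, huq] at hl
    nlinarith [norm_nonneg p]
  have hup : ⟪u, p⟫ = 0 := inner_cross_self u q
  have hpq : ⟪p, q⟫ = 0 := inner_cross_right u q
  obtain ⟨B, hB0, hB1, hB2⟩ := exists_onb u p q hu hp hq hup huq hpq
  apply uniSphere_le_of_cone s hs
  have hsub : Ioo (0:ℝ) 1 • (Subtype.val '' s) ⊆
      {x : E3 | |⟪u, x⟫| ≤ 1 ∧ |⟪p, x⟫| ≤ r ∧ |⟪q, x⟫| ≤ m} := by
    intro x hx
    rw [Set.mem_smul] at hx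
    obtain ⟨t, ht, y, hy, rfl⟩ := hx
    obtain ⟨v, hvs, rfl⟩ := hy
    have hv1 : ‖(v:E3)‖ = 1 := by
      have := v.2
      rwa [mem_sphere_zero_iff_norm] at this
    have hA : ‖cross u (v:E3)‖ ≤ r := hvs.1
    have hqv : |⟪q, (v:E3)⟫| ≤ m := hvs.2
    have ht0 : 0 < t := ht.1
    have ht1 : t < 1 := ht.2
    have habs_t : |t| ≤ 1 := by rw [abs_of_pos ht0]; linarith
    have hpv : |⟪p, (v:E3)⟫| ≤ r := by
      apply my_abs_le _ _ _ hr0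
      have hb := bessel2 u p (v:E3) hu hp hup
      have hl := lagrange u (v:E3)
      rw [hu, hv1] at hl
      have hA2 : ‖cross u (v:E3)‖^2 ≤ r^2 := by nlinarith [norm_nonneg (cross u (v:E3))]
      nlinarith
    refine ⟨?_, ?_, ?_⟩
    · rw [real_inner_smul_right, abs_mul]
      calc |t| * |⟪u, (v:E3)⟫| ≤ 1 * (‖u‖ * ‖(v:E3)‖) :=
            mul_le_mul habs_t (abs_real_inner_le_norm _ _) (abs_nonneg _) zero_le_one
        _ = 1 := by rw [hu, hv1]; norm_num
    · rw [real_inner_smul_right, abs_mul]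
      calc |t| * |⟪p, (v:E3)⟫| ≤ 1 * r := mul_le_mul habs_t hpv (abs_nonneg _) zero_le_one
        _ = r := one_mul r
    · rw [real_inner_smul_right, abs_mul]
      calc |t| * |⟪q, (v:E3)⟫| ≤ 1 * m := mul_le_mul habs_t hqv (abs_nonneg _) zero_le_one
        _ = m := one_mul m
  calc volume (Ioo (0:ℝ) 1 • (Subtype.val '' s))
      ≤ volume {x : E3 | |⟪u, x⟫| ≤ 1 ∧ |⟪p, x⟫| ≤ r ∧ |⟪q, x⟫| ≤ m} := measure_mono hsub
    _ = ENNReal.ofReal (2*1) * ENNReal.ofReal (2*r) * ENNReal.ofReal (2*m) := by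
        rw [← hB0, ← hB1, ← hB2]; exact slabVolume B 1 r m
    _ = ENNReal.ofReal (8 * (r * m)) := by
        rw [← ENNReal.ofReal_mul (by norm_num), ← ENNReal.ofReal_mul (by positivity)]
        norm_num
        ring_nf
        rw [ENNReal.ofReal_mul (by positivity)]
        norm_num
lemma exists_unit_perp (u : E3) : ∃ q : E3, ‖q‖ = 1 ∧ ⟪u, q⟫ = 0 := by
  by_cases h : u 1 = 0 ∧ u 2 = 0
  · refine ⟨eY, ?_, ?_⟩
    · exact eY_norm
    · rw [inner3, eY_0, eY_1, eY_2]
      simp [h.1]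
  · set b : E3 := WithLp.toLp 2 ![0, -u 2, u 1] with hbdef
    have hb0 : b 0 = 0 := rfl
    have hb1 : b 1 = -u 2 := rfl
    have hb2 : b 2 = u 1 := rfl
    have hβ2 : ‖b‖^2 = u 1^2 + u 2^2 := by rw [normsq3, hb0, hb1, hb2]; ring
    have hβpos : 0 < ‖b‖ := by
      rcases (not_and_or.mp h) with h1 | h2
      · have : 0 < u 1^2 := by positivity
        nlinarith [norm_nonneg b]
      · have : 0 < u 2^2 := by positivity
        nlinarith [norm_nonneg b]
    refine ⟨‖b‖⁻¹ • b, ?_, ?_⟩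
    · rw [norm_smul, norm_inv, norm_norm]
      field_simp
    · rw [real_inner_smul_right, inner3, hb0, hb1, hb2]
      ring

lemma cap_bound (u : E3) (r : ℝ) (hu : ‖u‖ = 1) :
    uniSphere {v : ↥S2 | ‖cross u (v:E3)‖ ≤ r} ≤ ENNReal.ofReal (8 * (r * r)) := by
  obtain ⟨q, hq, huq⟩ := exists_unit_perp u
  rcases le_or_gt 0 r with hr0 | hr0
  · calc uniSphere {v : ↥S2 | ‖cross u (v:E3)‖ ≤ r}
        ≤ uniSphere {v : ↥S2 | ‖cross u (v:E3)‖ ≤ r ∧ |⟪q, (v:E3)⟫| ≤ r} := by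
          apply measure_mono
          intro v hv
          refine ⟨hv, ?_⟩
          apply my_abs_le _ _ _ hr0
          have hb := bessel2 u q (v:E3) hu hq huq
          have hl := lagrange u (v:E3)
          have hv1 : ‖(v:E3)‖ = 1 := by
            have := v.2
            rwa [mem_sphere_zero_iff_norm] at this
          rw [hu, hv1] at hl
          have hvle : ‖cross u (v:E3)‖ ≤ r := hv
          have hA2 : ‖cross u (v:E3)‖^2 ≤ r^2 := by
            nlinarith [norm_nonneg (cross u (v:E3))]
          nlinarith
      _ ≤ ENNReal.ofReal (8 * (r * r)) := master u q hu hq huq r r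
  · have he : {v : ↥S2 | ‖cross u (v:E3)‖ ≤ r} = ∅ := by
      ext v
      simp only [mem_setOf_eq, mem_empty_iff_false, iff_false, not_le]
      exact lt_of_lt_of_le hr0 (norm_nonneg _)
    rw [he]
    simp

lemma cap_bound2 (u : E3) (r ρ : ℝ) (hu : ‖u‖ = 1) (hr : 0 < r) (hρ : 0 < ρ) :
    uniSphere {v : ↥S2 | ‖cross u (v:E3)‖ ≤ r ∧ |⟪e3, cross u (v:E3)⟫| ≤ ρ}
      ≤ ENNReal.ofReal (8 * (r * ρ)) / ENNReal.ofReal ‖cross e3 u‖ := by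
  set b : E3 := cross e3 u with hbdef
  by_cases hβ : ‖b‖ = 0
  · rw [hβ, ENNReal.ofReal_zero, ENNReal.div_zero (by positivity)]
    exact le_top
  · have hβpos : 0 < ‖b‖ := (norm_nonneg b).lt_of_ne (Ne.symm hβ)
    have hbu : ⟪u, b⟫ = 0 := by
      rw [hbdef]
      simp only [inner3, cross_apply0, cross_apply1, cross_apply2, e3_0, e3_1, e3_2]
      ring
    set q : E3 := ‖b‖⁻¹ • b with hqdef
    have hq : ‖q‖ = 1 := by
      rw [hqdef, norm_smul, norm_inv, norm_norm]
      field_simp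
    have huq : ⟪u, q⟫ = 0 := by
      rw [hqdef, real_inner_smul_right, hbu, mul_zero]
    calc uniSphere {v : ↥S2 | ‖cross u (v:E3)‖ ≤ r ∧ |⟪e3, cross u (v:E3)⟫| ≤ ρ}
        ≤ uniSphere {v : ↥S2 | ‖cross u (v:E3)‖ ≤ r ∧ |⟪q, (v:E3)⟫| ≤ ρ / ‖b‖} := by
          apply measure_mono
          rintro v ⟨h1, h2⟩
          refine ⟨h1, ?_⟩
          have htr : ⟪b, (v:E3)⟫ = ⟪e3, cross u (v:E3)⟫ := (triple u (v:E3)).symm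
          rw [real_inner_smul_left, htr, abs_mul, abs_inv, abs_norm, div_eq_inv_mul]
          exact mul_le_mul_of_nonneg_left h2 (by positivity)
      _ ≤ ENNReal.ofReal (8 * (r * (ρ / ‖b‖))) := master u q hu hq huq r (ρ / ‖b‖)
      _ = ENNReal.ofReal (8 * (r * ρ)) / ENNReal.ofReal ‖b‖ := by
          rw [← ENNReal.ofReal_div_of_pos hβpos]
          congr 1
          field_simp
lemma sphereVol_univ_ne_zero : sphereVol Set.univ ≠ 0 := by
  have h2 : sphereVol univ = 3 * volume (Metric.ball (0:E3) 1) := by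
    rw [sphereVol, Measure.toSphere_apply_univ, finrank_euclideanSpace_fin]
    norm_num
  rw [h2]
  intro hc
  rcases mul_eq_zero.mp hc with h | h
  · norm_num at h
  · have hbv := ball_vol_ge
    rw [h] at hbv
    exact (by norm_num : ¬ ((1:ℝ≥0∞) ≤ 0)) hbv

instance uniSphere_prob : IsProbabilityMeasure uniSphere := by
  constructor
  rw [uniSphere, Measure.smul_apply, smul_eq_mul]
  exact ENNReal.inv_mul_cancel sphereVol_univ_ne_zero (by rw [sphereVol]; exact measure_ne_top _ _)

lemma lint_Ioi_inv_sq (T c : ℝ) (hT : 0 < T) (hc : 0 ≤ c) :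
    ∫⁻ h in Ioi T, ENNReal.ofReal (c / h^2) = ENNReal.ofReal (c / T) := by
  have heq : ∀ h ∈ Ioi T, c / h^2 = c * h^(-2:ℝ) := by
    intro h hh
    have hh0 : 0 < h := hT.trans hh
    rw [Real.rpow_neg hh0.le, show ((2:ℝ) = ((2:ℕ):ℝ)) by norm_num, Real.rpow_natCast]
    field_simp
  have hint : IntegrableOn (fun h : ℝ => c / h^2) (Ioi T) := by
    apply IntegrableOn.congr_fun _ (fun h hh => (heq h hh).symm) measurableSet_Ioi
    exact (integrableOn_Ioi_rpow_of_lt (by norm_num : (-2:ℝ) < -1) hT).const_mul c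
  rw [← ofReal_integral_eq_lintegral_ofReal hint
    (ae_of_all _ fun h => div_nonneg hc (sq_nonneg h))]
  congr 1
  rw [setIntegral_congr_fun measurableSet_Ioi heq, integral_const_mul,
    integral_Ioi_rpow_of_lt (by norm_num : (-2:ℝ) < -1) hT]
  rw [show (-2:ℝ) + 1 = -1 by norm_num, Real.rpow_neg_one]
  field_simp

lemma beta_cont : Continuous fun u : ↥S2 => ‖cross e3 (u:E3)‖ :=
  ((continuous_cross e3).comp continuous_subtype_val).norm

lemma lint_inv_beta :
    ∫⁻ u : ↥S2, (ENNReal.ofReal ‖cross e3 (u:E3)‖)⁻¹ ∂uniSphere ≤ 6 := by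
  have hzero : uniSphere {u : ↥S2 | ‖cross e3 (u:E3)‖ = 0} = 0 := by
    have hb := cap_bound e3 0 e3_norm
    rw [show (8 * ((0:ℝ) * 0)) = 0 by ring, ENNReal.ofReal_zero] at hb
    refine le_antisymm ?_ zero_le
    refine le_trans (measure_mono ?_) hb
    intro u hu
    exact le_of_eq hu
  have hae : (fun u : ↥S2 => (ENNReal.ofReal ‖cross e3 (u:E3)‖)⁻¹)
      =ᵐ[uniSphere] fun u => ENNReal.ofReal (‖cross e3 (u:E3)‖)⁻¹ := by
    rw [← compl_mem_ae_iff] at hzero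
    filter_upwards [hzero] with u hu
    have hpos : 0 < ‖cross e3 (u:E3)‖ := (norm_nonneg _).lt_of_ne (Ne.symm hu)
    rw [← ENNReal.ofReal_inv_of_pos hpos]
  rw [lintegral_congr_ae hae,
    lintegral_eq_lintegral_meas_lt uniSphere
      (ae_of_all _ fun u => inv_nonneg.mpr (norm_nonneg _))
      (beta_cont.measurable.inv.aemeasurable)]
  have hsplit : (Ioi (0:ℝ)) = Ioc (0:ℝ) 3 ∪ Ioi (3:ℝ) := (Ioc_union_Ioi_eq_Ioi (by norm_num)).symm
  rw [hsplit, lintegral_union measurableSet_Ioi Ioc_disjoint_Ioi_same]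
  have h1 : ∫⁻ t in Ioc (0:ℝ) 3, uniSphere {u : ↥S2 | t < ‖cross e3 (u:E3)‖⁻¹}
      ≤ ENNReal.ofReal 3 := by
    calc ∫⁻ t in Ioc (0:ℝ) 3, uniSphere {u : ↥S2 | t < ‖cross e3 (u:E3)‖⁻¹}
        ≤ ∫⁻ _ in Ioc (0:ℝ) 3, 1 := lintegral_mono fun t => prob_le_one
      _ = ENNReal.ofReal 3 := by
          rw [setLIntegral_const]
          simp [Real.volume_Ioc]
  have h2 : ∫⁻ t in Ioi (3:ℝ), uniSphere {u : ↥S2 | t < ‖cross e3 (u:E3)‖⁻¹}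
      ≤ ENNReal.ofReal (8/3) := by
    have hb : ∀ t ∈ Ioi (3:ℝ), uniSphere {u : ↥S2 | t < ‖cross e3 (u:E3)‖⁻¹}
        ≤ ENNReal.ofReal (8 / t^2) := by
      intro t ht
      have ht0 : (0:ℝ) < t := lt_trans (by norm_num) ht
      have hsub : {u : ↥S2 | t < ‖cross e3 (u:E3)‖⁻¹}
          ⊆ {u : ↥S2 | ‖cross e3 (u:E3)‖ ≤ 1/t} := by
        intro u hu
        have hu' : t < ‖cross e3 (u:E3)‖⁻¹ := hu
        show ‖cross e3 (u:E3)‖ ≤ 1/t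
        by_cases hz : ‖cross e3 (u:E3)‖ = 0
        · rw [hz]; positivity
        · have hpos : 0 < ‖cross e3 (u:E3)‖ := (norm_nonneg _).lt_of_ne (Ne.symm hz)
          have := (inv_lt_inv₀ (inv_pos.mpr hpos) ht0).mpr hu'
          rw [inv_inv] at this
          rw [one_div]
          exact this.le
      calc uniSphere {u : ↥S2 | t < ‖cross e3 (u:E3)‖⁻¹}
          ≤ uniSphere {u : ↥S2 | ‖cross e3 (u:E3)‖ ≤ 1/t} := measure_mono hsub
        _ ≤ ENNReal.ofReal (8 * ((1/t) * (1/t))) := cap_bound e3 (1/t) e3_norm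
        _ = ENNReal.ofReal (8 / t^2) := by congr 1; field_simp
    calc ∫⁻ t in Ioi (3:ℝ), uniSphere {u : ↥S2 | t < ‖cross e3 (u:E3)‖⁻¹}
        ≤ ∫⁻ t in Ioi (3:ℝ), ENNReal.ofReal (8 / t^2) := by
          apply setLIntegral_mono' measurableSet_Ioi hb
      _ = ENNReal.ofReal (8/3) := lint_Ioi_inv_sq 3 8 (by norm_num) (by norm_num)
  calc _ ≤ ENNReal.ofReal 3 + ENNReal.ofReal (8/3) := add_le_add h1 h2
    _ ≤ 6 := by
        rw [← ENNReal.ofReal_add (by norm_num) (by norm_num)]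
        rw [show (6:ℝ≥0∞) = ENNReal.ofReal 6 by norm_num]
        apply ENNReal.ofReal_le_ofReal
        norm_num

lemma continuous_cross2 : Continuous fun q : E3 × E3 => cross q.1 q.2 := by
  unfold cross
  apply (PiLp.continuous_toLp 2 _).comp
  apply continuous_pi
  intro i
  fin_cases i <;> simp <;> fun_prop


/-- There is a constant `C > 0` such that for all `s > 0`,
`λ({(u,h,v) : h ≥ 10, ‖u × v‖ ≤ 2/h, (1 + h/2)·|⟪e, u × v⟫| ≤ 4/s}) ≤ C/(1+s)`. -/
theorem recollision_angle_measure_bound :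
    ∃ C : ℝ, 0 < C ∧ ∀ s : ℝ, 0 < s →
      lambdaMeasure {p : ↥S2 × ℝ × ↥S2 |
          10 ≤ p.2.1 ∧ ‖cross (p.1 : E3) (p.2.2 : E3)‖ ≤ 2 / p.2.1 ∧
          (1 + p.2.1 / 2) * |⟪e3, cross (p.1 : E3) (p.2.2 : E3)⟫| ≤ 4 / s}
        ≤ ENNReal.ofReal (C / (1 + s)) := by

  refine ⟨160, by norm_num, ?_⟩
  intro s hs
  set A := {p : ↥S2 × ℝ × ↥S2 |
      10 ≤ p.2.1 ∧ ‖cross (p.1 : E3) (p.2.2 : E3)‖ ≤ 2 / p.2.1 ∧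
      (1 + p.2.1 / 2) * |⟪e3, cross (p.1 : E3) (p.2.2 : E3)⟫| ≤ 4 / s} with hA_def
  have hm1 : Measurable fun p : ↥S2 × ℝ × ↥S2 => p.2.1 := measurable_fst.comp measurable_snd
  have hcv : Continuous fun p : ↥S2 × ℝ × ↥S2 => cross (p.1 : E3) (p.2.2 : E3) :=
    continuous_cross2.comp ((continuous_subtype_val.comp continuous_fst).prodMk
      (continuous_subtype_val.comp (continuous_snd.comp continuous_snd)))
  have hm2 : Measurable fun p : ↥S2 × ℝ × ↥S2 => ‖cross (p.1 : E3) (p.2.2 : E3)‖ :=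
    hcv.norm.measurable
  have hm3 : Measurable fun p : ↥S2 × ℝ × ↥S2 => ⟪e3, cross (p.1 : E3) (p.2.2 : E3)⟫ :=
    (Continuous.inner continuous_const hcv).measurable
  have hA : MeasurableSet A := by
    have e1 : MeasurableSet {p : ↥S2 × ℝ × ↥S2 | 10 ≤ p.2.1} :=
      measurableSet_le measurable_const hm1
    have e2 : MeasurableSet {p : ↥S2 × ℝ × ↥S2 |
        ‖cross (p.1 : E3) (p.2.2 : E3)‖ ≤ 2 / p.2.1} :=
      measurableSet_le hm2 (measurable_const.div hm1)
    have e3' : MeasurableSet {p : ↥S2 × ℝ × ↥S2 |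
        (1 + p.2.1 / 2) * |⟪e3, cross (p.1 : E3) (p.2.2 : E3)⟫| ≤ 4 / s} :=
      measurableSet_le (((measurable_const.add (hm1.div_const 2)).mul hm3.abs)) measurable_const
    exact e1.inter (e2.inter e3')
  rw [lambdaMeasure, Measure.prod_apply hA]
  have hslice : ∀ u : ↥S2, MeasurableSet (Prod.mk u ⁻¹' A) := fun u =>
    measurable_prodMk_left hA
  have hVset : ∀ (u : ↥S2) (h : ℝ), (Prod.mk h ⁻¹' (Prod.mk u ⁻¹' A)) =
      {v : ↥S2 | 10 ≤ h ∧ ‖cross (u:E3) (v:E3)‖ ≤ 2 / h ∧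
        (1 + h / 2) * |⟪e3, cross (u:E3) (v:E3)⟫| ≤ 4 / s} := fun u h => rfl
  have hinner : ∀ u : ↥S2,
      ((volume.restrict (Set.Ici (0:ℝ))).prod uniSphere) (Prod.mk u ⁻¹' A)
      = ∫⁻ h in Set.Ici (0:ℝ), uniSphere (Prod.mk h ⁻¹' (Prod.mk u ⁻¹' A)) := by
    intro u
    rw [Measure.prod_apply (hslice u)]
  rcases le_or_gt s 1 with hs1 | hs1
  · -- small s
    have hbound : ∀ (u : ↥S2) (h : ℝ),
        uniSphere (Prod.mk h ⁻¹' (Prod.mk u ⁻¹' A))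
        ≤ (Set.Ici (10:ℝ)).indicator (fun h => ENNReal.ofReal (8 * ((2/h) * (2/h)))) h := by
      intro u h
      rw [hVset]
      by_cases h10 : (10:ℝ) ≤ h
      · rw [Set.indicator_of_mem (show h ∈ Set.Ici (10:ℝ) from h10)]
        have hu1 : ‖(u:E3)‖ = 1 := by
          have := u.2; rwa [mem_sphere_zero_iff_norm] at this
        refine le_trans (measure_mono ?_) (cap_bound (u:E3) (2/h) hu1)
        intro v hv
        exact hv.2.1
      · have he : {v : ↥S2 | 10 ≤ h ∧ ‖cross (u:E3) (v:E3)‖ ≤ 2 / h ∧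
            (1 + h / 2) * |⟪e3, cross (u:E3) (v:E3)⟫| ≤ 4 / s} = ∅ := by
          ext v; simp [h10]
        rw [he]
        simp
    have hhint : ∫⁻ h in Set.Ici (0:ℝ),
        (Set.Ici (10:ℝ)).indicator (fun h => ENNReal.ofReal (8 * ((2/h) * (2/h)))) h
        = ENNReal.ofReal (32/10) := by
      rw [lintegral_indicator measurableSet_Ici, Measure.restrict_restrict measurableSet_Ici,
        Set.Ici_inter_Ici, show ((10:ℝ) ⊔ 0) = 10 from by norm_num,
        ← restrict_Ioi_eq_restrict_Ici]
      calc ∫⁻ h in Set.Ioi (10:ℝ), ENNReal.ofReal (8 * ((2/h) * (2/h)))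
          = ∫⁻ h in Set.Ioi (10:ℝ), ENNReal.ofReal (32 / h^2) := by
            apply setLIntegral_congr_fun measurableSet_Ioi
            intro h hh
            have h0 : (0:ℝ) < h := lt_trans (by norm_num) hh
            congr 1
            field_simp
            ring
        _ = ENNReal.ofReal (32/10) := lint_Ioi_inv_sq 10 32 (by norm_num) (by norm_num)
    calc ∫⁻ u, ((volume.restrict (Set.Ici (0:ℝ))).prod uniSphere) (Prod.mk u ⁻¹' A) ∂uniSphere
        ≤ ∫⁻ _, ENNReal.ofReal (32/10) ∂uniSphere := by
          apply lintegral_mono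
          intro u
          show ((volume.restrict (Set.Ici (0:ℝ))).prod uniSphere) (Prod.mk u ⁻¹' A)
            ≤ ENNReal.ofReal (32/10)
          rw [hinner u, ← hhint]
          exact lintegral_mono (hbound u)
      _ = ENNReal.ofReal (32/10) := by
          rw [lintegral_const, measure_univ, mul_one]
      _ ≤ ENNReal.ofReal (160 / (1 + s)) := by
          apply ENNReal.ofReal_le_ofReal
          rw [le_div_iff₀ (by positivity)]
          nlinarith
  · -- large s
    have hbound : ∀ (u : ↥S2) (h : ℝ),
        uniSphere (Prod.mk h ⁻¹' (Prod.mk u ⁻¹' A))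
        ≤ (Set.Ici (10:ℝ)).indicator
            (fun h => ENNReal.ofReal ((128/s) / h^2)
              / ENNReal.ofReal ‖cross e3 (u:E3)‖) h := by
      intro u h
      rw [hVset]
      by_cases h10 : (10:ℝ) ≤ h
      · rw [Set.indicator_of_mem (show h ∈ Set.Ici (10:ℝ) from h10)]
        have hu1 : ‖(u:E3)‖ = 1 := by
          have := u.2; rwa [mem_sphere_zero_iff_norm] at this
        have h0 : (0:ℝ) < h := lt_of_lt_of_le (by norm_num) h10
        have hsub : {v : ↥S2 | 10 ≤ h ∧ ‖cross (u:E3) (v:E3)‖ ≤ 2 / h ∧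
            (1 + h / 2) * |⟪e3, cross (u:E3) (v:E3)⟫| ≤ 4 / s}
            ⊆ {v : ↥S2 | ‖cross (u:E3) (v:E3)‖ ≤ 2/h ∧
              |⟪e3, cross (u:E3) (v:E3)⟫| ≤ 8/(s*h)} := by
          rintro v ⟨-, hv2, hv3⟩
          refine ⟨hv2, ?_⟩
          have hab : (0:ℝ) ≤ |⟪e3, cross (u:E3) (v:E3)⟫| := abs_nonneg _
          have hv3' : (1 + h/2) * |⟪e3, cross (u:E3) (v:E3)⟫| * s ≤ 4 :=
            (le_div_iff₀ hs).mp hv3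
          rw [le_div_iff₀ (by positivity : (0:ℝ) < s*h)]
          nlinarith [mul_nonneg hs.le hab]
        refine le_trans (measure_mono hsub) ?_
        refine le_trans (cap_bound2 (u:E3) (2/h) (8/(s*h)) hu1 (by positivity) (by positivity)) ?_
        apply le_of_eq
        congr 1
        rw [show (8:ℝ) * ((2/h) * (8/(s*h))) = (128/s)/h^2 from by field_simp; ring]
      · have he : {v : ↥S2 | 10 ≤ h ∧ ‖cross (u:E3) (v:E3)‖ ≤ 2 / h ∧
            (1 + h / 2) * |⟪e3, cross (u:E3) (v:E3)⟫| ≤ 4 / s} = ∅ := by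
          ext v; simp [h10]
        rw [he]
        simp
    have hmeasInv : Measurable fun u : ↥S2 => (ENNReal.ofReal ‖cross e3 (u:E3)‖)⁻¹ :=
      (ENNReal.measurable_ofReal.comp beta_cont.measurable).inv
    have hhint : ∀ u : ↥S2, ∫⁻ h in Set.Ici (0:ℝ),
        (Set.Ici (10:ℝ)).indicator
          (fun h => ENNReal.ofReal ((128/s) / h^2) / ENNReal.ofReal ‖cross e3 (u:E3)‖) h
        = ENNReal.ofReal ((128/s)/10) / ENNReal.ofReal ‖cross e3 (u:E3)‖ := by
      intro u
      rw [lintegral_indicator measurableSet_Ici, Measure.restrict_restrict measurableSet_Ici,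
        Set.Ici_inter_Ici, show ((10:ℝ) ⊔ 0) = 10 from by norm_num,
        ← restrict_Ioi_eq_restrict_Ici]
      have hX : Measurable fun h : ℝ => ENNReal.ofReal ((128/s)/h^2) :=
        ENNReal.measurable_ofReal.comp
          (Measurable.div measurable_const (measurable_id.pow_const 2))
      simp only [ENNReal.div_eq_inv_mul]
      rw [lintegral_const_mul _ hX]
      congr 1
      exact lint_Ioi_inv_sq 10 (128/s) (by norm_num) (by positivity)
    calc ∫⁻ u, ((volume.restrict (Set.Ici (0:ℝ))).prod uniSphere) (Prod.mk u ⁻¹' A) ∂uniSphere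
        ≤ ∫⁻ u, ENNReal.ofReal ((128/s)/10) * (ENNReal.ofReal ‖cross e3 (u:E3)‖)⁻¹
            ∂uniSphere := by
          apply lintegral_mono
          intro u
          show ((volume.restrict (Set.Ici (0:ℝ))).prod uniSphere) (Prod.mk u ⁻¹' A)
            ≤ ENNReal.ofReal ((128/s)/10) * (ENNReal.ofReal ‖cross e3 (u:E3)‖)⁻¹
          rw [hinner u, ← div_eq_mul_inv, ← hhint u]
          exact lintegral_mono (hbound u)
      _ = ENNReal.ofReal ((128/s)/10)
            * ∫⁻ u, (ENNReal.ofReal ‖cross e3 (u:E3)‖)⁻¹ ∂uniSphere := by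
          rw [lintegral_const_mul _ hmeasInv]
      _ ≤ ENNReal.ofReal ((128/s)/10) * 6 := mul_le_mul_right lint_inv_beta _
      _ ≤ ENNReal.ofReal (160 / (1 + s)) := by
          rw [show (6:ℝ≥0∞) = ENNReal.ofReal 6 from by norm_num,
            ← ENNReal.ofReal_mul (by positivity)]
          apply ENNReal.ofReal_le_ofReal
          rw [show (128/s)/10*6 = (768/10)/s from by field_simp; ring,
            div_le_div_iff₀ (by positivity) (by positivity)]
          nlinarith
end

section
/- Let ξ₁, ξ₂ be independent random variables with the exponential distribution of rate 1 on [0,∞), and let ω₁, ω₂ be independent random vectors uniformly distributed on the unit sphere S² ⊂ ℝ³, with ξ₁, ξ₂, ω₁, ω₂ all mutually independent. Set Y₁ = ξ₁·ω₁ and Y₂ = ξ₂·ω₂. Then there exist constants c > 0 and ε₀ ∈ (0,1) such that for all ε ∈ (0, ε₀): E[min(1, ε²/‖Y₁ + Y₂‖²)] ≥ c·ε²·|log ε|. -/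
open MeasureTheory

/-- The exponential distribution of rate 1 on `[0,∞)`, with density `e^{-x}`. -/
noncomputable def expMeasure : Measure ℝ :=
  (volume.restrict (Set.Ici (0 : ℝ))).withDensity fun x => ENNReal.ofReal (Real.exp (-x))

/-- The joint law of `(ξ₁, ξ₂, ω₁, ω₂)` with `ξ₁, ξ₂ ∼ Exp(1)` and `ω₁, ω₂ ∼ Uni(S²)`,
all mutually independent. -/
noncomputable def jointLaw : Measure (ℝ × ℝ × ↥S2 × ↥S2) :=
  expMeasure.prod (expMeasure.prod (uniSphere.prod uniSphere))

namespace Reco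

open Set Metric ENNReal

lemma finrank_E3 : Module.finrank ℝ E3 = 3 := finrank_euclideanSpace_fin

noncomputable def V : ℝ≥0∞ := (volume : Measure E3) (Metric.ball 0 1)

lemma V_pos : 0 < V := measure_ball_pos _ _ one_pos
lemma V_ne_top : V ≠ ∞ := measure_ball_lt_top.ne
lemma V_ne_zero : V ≠ 0 := V_pos.ne'

lemma A_eq : sphereVol Set.univ = 3 * V := by
  rw [sphereVol, Measure.toSphere_apply_univ, finrank_E3, V]
  norm_num

lemma A_ne_zero : sphereVol Set.univ ≠ 0 := by
  rw [A_eq]; exact mul_ne_zero (by norm_num) V_ne_zero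

lemma A_ne_top : sphereVol Set.univ ≠ ∞ := by
  rw [A_eq]; exact ENNReal.mul_ne_top (by norm_num) V_ne_top

instance : IsProbabilityMeasure expMeasure := by
  constructor
  rw [expMeasure, withDensity_apply _ MeasurableSet.univ, Measure.restrict_univ,
    Measure.restrict_congr_set (Filter.EventuallyEq.symm Ioi_ae_eq_Ici),
    ← ofReal_integral_eq_lintegral_ofReal
      (by simpa [IntegrableOn] using exp_neg_integrableOn_Ioi 0 one_pos)
      (Filter.Eventually.of_forall fun x => (Real.exp_pos _).le),
    integral_exp_neg_Ioi_zero, ENNReal.ofReal_one]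

instance : IsProbabilityMeasure uniSphere := by
  constructor
  rw [uniSphere, Measure.smul_apply, smul_eq_mul, ENNReal.inv_mul_cancel A_ne_zero A_ne_top]

instance : IsProbabilityMeasure jointLaw := by
  rw [jointLaw]; infer_instance

lemma lintegral_polar (f : E3 → ℝ≥0∞) (hf : Measurable f) :
    ∫⁻ x, f x ∂(volume : Measure E3)
      = ∫⁻ ω : ↥S2, ∫⁻ r in Set.Ioi (0:ℝ),
          ENNReal.ofReal (r ^ 2) * f (r • (ω : E3)) ∂volume ∂sphereVol := by
  have hsm : Measurable fun p : ↥S2 × Set.Ioi (0:ℝ) => ((p.2 : ℝ) • (p.1 : E3)) :=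
    ((continuous_subtype_val.comp continuous_snd).smul
      (continuous_subtype_val.comp continuous_fst)).measurable
  have MP := (volume : Measure E3).measurePreserving_homeomorphUnitSphereProd
  rw [finrank_E3] at MP
  have h3 : ∀ x : ({0}ᶜ : Set E3),
      f (((homeomorphUnitSphereProd E3 x).2 : ℝ) • ((homeomorphUnitSphereProd E3 x).1 : E3))
        = f x := by
    intro x
    congr 1
    simp only [homeomorphUnitSphereProd_apply_snd_coe, homeomorphUnitSphereProd_apply_fst_coe]
    exact smul_inv_smul₀ (norm_ne_zero_iff.2 x.2) x.1
  calc ∫⁻ x, f x ∂(volume : Measure E3)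
      = ∫⁻ x : ({0}ᶜ : Set E3), f x ∂((volume : Measure E3).comap (↑)) := by
        rw [lintegral_subtype_comap (measurableSet_singleton 0).compl, restrict_compl_singleton]
    _ = ∫⁻ p : ↥S2 × Set.Ioi (0:ℝ), f ((p.2:ℝ) • (p.1:E3))
          ∂(sphereVol.prod (Measure.volumeIoiPow (3-1))) := by
        have hm : Measurable fun p : ↥S2 × Set.Ioi (0:ℝ) => f ((p.2:ℝ) • (p.1:E3)) :=
          hf.comp hsm
        have h2 := MP.lintegral_comp (f := fun p : ↥S2 × Set.Ioi (0:ℝ) =>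
          f ((p.2:ℝ) • (p.1:E3))) hm
        beta_reduce at h2
        rw [lintegral_congr h3] at h2
        exact h2
    _ = ∫⁻ ω : ↥S2, ∫⁻ r in Set.Ioi (0:ℝ),
          ENNReal.ofReal (r ^ 2) * f (r • (ω : E3)) ∂volume ∂sphereVol := by
        have hm : Measurable fun p : ↥S2 × Set.Ioi (0:ℝ) => f ((p.2:ℝ) • (p.1:E3)) :=
          hf.comp hsm
        rw [lintegral_prod _ hm.aemeasurable]
        refine lintegral_congr fun ω => ?_
        show (∫⁻ r : Set.Ioi (0:ℝ), f ((r:ℝ) • (ω:E3))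
            ∂(Measure.volumeIoiPow (3-1))) = _
        have hg : Measurable fun r : Set.Ioi (0:ℝ) => f ((r:ℝ) • (ω:E3)) :=
          hf.comp ((continuous_subtype_val.smul continuous_const).measurable)
        rw [Measure.volumeIoiPow,
          lintegral_withDensity_eq_lintegral_mul _
            ((measurable_subtype_coe.pow_const _).ennreal_ofReal) hg]
        simp only [Pi.mul_apply]
        rw [lintegral_subtype_comap measurableSet_Ioi
            (fun r : ℝ => ENNReal.ofReal (r ^ (3-1)) * f (r • (ω:E3)))]

/-- The weight function: density of the law of `ξ • ω`. -/
noncomputable def wt (x : E3) : ℝ≥0∞ := ENNReal.ofReal (Real.exp (-‖x‖) / ‖x‖ ^ 2)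

lemma wt_measurable : Measurable wt :=
  ((Real.measurable_exp.comp measurable_norm.neg).div
    (measurable_norm.pow_const 2)).ennreal_ofReal

lemma key (f : E3 → ℝ≥0∞) (hf : Measurable f) :
    ∫⁻ ω : ↥S2, ∫⁻ ξ : ℝ, f (ξ • (ω : E3)) ∂expMeasure ∂uniSphere
      = (sphereVol Set.univ)⁻¹ * ∫⁻ x, f x * wt x := by
  have hstep : ∀ ω : ↥S2, ∫⁻ ξ : ℝ, f (ξ • (ω : E3)) ∂expMeasure
      = ∫⁻ r in Set.Ioi (0:ℝ), ENNReal.ofReal (Real.exp (-r)) * f (r • (ω : E3)) ∂volume := by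
    intro ω
    have hd : Measurable fun x : ℝ => ENNReal.ofReal (Real.exp (-x)) :=
      Measurable.ennreal_ofReal (by fun_prop)
    have hg : Measurable fun ξ : ℝ => f (ξ • (ω : E3)) :=
      hf.comp (measurable_id.smul_const (ω : E3))
    rw [expMeasure, lintegral_withDensity_eq_lintegral_mul _ hd hg]
    simp only [Pi.mul_apply]
    rw [Measure.restrict_congr_set (Filter.EventuallyEq.symm Ioi_ae_eq_Ici)]
  have hpolar := lintegral_polar (fun x => f x * wt x) (hf.mul wt_measurable)
  have hinner : ∀ ω : ↥S2, (∫⁻ r in Set.Ioi (0:ℝ),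
      ENNReal.ofReal (r ^ 2) * (f (r • (ω : E3)) * wt (r • (ω : E3))) ∂volume)
      = ∫⁻ r in Set.Ioi (0:ℝ), ENNReal.ofReal (Real.exp (-r)) * f (r • (ω : E3)) ∂volume := by
    intro ω
    refine setLIntegral_congr_fun measurableSet_Ioi ?_
    intro r hr
    have hr0 : (0:ℝ) < r := hr
    have hnorm : ‖r • (ω : E3)‖ = r := by
      rw [norm_smul, Real.norm_eq_abs, abs_of_pos hr0, mem_sphere_zero_iff_norm.1 ω.2, mul_one]
    show ENNReal.ofReal (r ^ 2) * (f (r • (ω:E3)) * wt (r • (ω:E3))) = _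
    rw [wt, hnorm, mul_left_comm, ← ENNReal.ofReal_mul (by positivity : (0:ℝ) ≤ r ^ 2), mul_comm]
    congr 2
    field_simp
  rw [hpolar]
  rw [uniSphere, lintegral_smul_measure]
  congr 1
  refine lintegral_congr fun ω => ?_
  rw [hstep ω, ← hinner ω]


lemma logint {a b : ℝ} (ha : 0 < a) (hab : a ≤ b) {c : ℝ} (hc : 0 ≤ c) :
    ∫⁻ r in Set.Icc a b, ENNReal.ofReal (c / r) ∂volume
      = ENNReal.ofReal (c * (Real.log b - Real.log a)) := by
  have hb : 0 < b := lt_of_lt_of_le ha hab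
  rw [← Measure.restrict_congr_set Ioc_ae_eq_Icc]
  have hi : IntegrableOn (fun r : ℝ => c / r) (Set.Ioc a b) := by
    refine (ContinuousOn.integrableOn_Icc ?_).mono_set Set.Ioc_subset_Icc_self
    exact continuousOn_const.div continuousOn_id
      fun x hx => ne_of_gt (lt_of_lt_of_le ha hx.1)
  have hnn : 0 ≤ᵐ[volume.restrict (Set.Ioc a b)] fun r : ℝ => c / r := by
    filter_upwards [ae_restrict_mem measurableSet_Ioc] with r hr
    exact div_nonneg hc (le_of_lt (lt_trans ha hr.1))
  rw [← ofReal_integral_eq_lintegral_ofReal hi hnn, ← intervalIntegral.integral_of_le hab]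
  have h0 : (0:ℝ) ∉ Set.uIcc a b := by
    rw [Set.uIcc_of_le hab]
    exact fun h => absurd h.1 (not_le.2 ha)
  have : (∫ x in a..b, c / x) = c * ∫ x in a..b, 1 / x := by
    rw [← intervalIntegral.integral_const_mul]
    congr 1
    ext x
    ring
  rw [this, integral_one_div h0, Real.log_div hb.ne' ha.ne']

lemma shell_int {c a b : ℝ} (hc : 0 ≤ c) (ha : 0 < a) (hab : a ≤ b) :
    ∫⁻ x in {x : E3 | ‖x‖ ∈ Set.Icc a b}, ENNReal.ofReal (c / ‖x‖ ^ 3) ∂volume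
      = sphereVol Set.univ * ENNReal.ofReal (c * (Real.log b - Real.log a)) := by
  have hS : MeasurableSet {x : E3 | ‖x‖ ∈ Set.Icc a b} :=
    measurable_norm measurableSet_Icc
  have hgm : Measurable fun x : E3 => ENNReal.ofReal (c / ‖x‖ ^ 3) :=
    (measurable_const.div (measurable_norm.pow_const 3)).ennreal_ofReal
  rw [← lintegral_indicator hS, lintegral_polar _ (hgm.indicator hS)]
  have hinner : ∀ ω : ↥S2, (∫⁻ r in Set.Ioi (0:ℝ), ENNReal.ofReal (r ^ 2) *
      Set.indicator {x : E3 | ‖x‖ ∈ Set.Icc a b}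
        (fun x => ENNReal.ofReal (c / ‖x‖ ^ 3)) (r • (ω : E3)) ∂volume)
      = ENNReal.ofReal (c * (Real.log b - Real.log a)) := by
    intro ω
    have hcong : ∀ r ∈ Set.Ioi (0:ℝ), ENNReal.ofReal (r ^ 2) *
        Set.indicator {x : E3 | ‖x‖ ∈ Set.Icc a b}
          (fun x => ENNReal.ofReal (c / ‖x‖ ^ 3)) (r • (ω : E3))
        = Set.indicator (Set.Icc a b) (fun r : ℝ => ENNReal.ofReal (c / r)) r := by
      intro r hr
      have hr0 : (0:ℝ) < r := hr
      have hnorm : ‖r • (ω : E3)‖ = r := by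
        rw [norm_smul, Real.norm_eq_abs, abs_of_pos hr0, mem_sphere_zero_iff_norm.1 ω.2,
          mul_one]
      by_cases hmem : r ∈ Set.Icc a b
      · rw [Set.indicator_of_mem (by simpa [hnorm] using hmem),
          Set.indicator_of_mem hmem, hnorm, ← ENNReal.ofReal_mul (by positivity)]
        congr 1
        field_simp
      · rw [Set.indicator_of_notMem (by simpa [hnorm] using hmem),
          Set.indicator_of_notMem hmem, mul_zero]
    have hsub : Set.Icc a b ⊆ Set.Ioi (0:ℝ) := fun r hr => lt_of_lt_of_le ha hr.1
    rw [setLIntegral_congr_fun measurableSet_Ioi hcong,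
      lintegral_indicator measurableSet_Icc, Measure.restrict_restrict measurableSet_Icc,
      Set.inter_eq_left.2 hsub]
    exact logint ha hab hc
  rw [lintegral_congr hinner, lintegral_const, mul_comm]


lemma reduction (F : E3 → ℝ≥0∞) (hF : Measurable F) :
    ∫⁻ p : ℝ × ℝ × ↥S2 × ↥S2, F (p.1 • (p.2.2.1 : E3) + p.2.1 • (p.2.2.2 : E3)) ∂jointLaw
      = (sphereVol Set.univ)⁻¹ * ((sphereVol Set.univ)⁻¹ *
          ∫⁻ x, (∫⁻ y, F (x + y) * wt y ∂volume) * wt x ∂volume) := by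
  have hAinv : (sphereVol Set.univ)⁻¹ ≠ ∞ := ENNReal.inv_ne_top.2 A_ne_zero
  have m1 : Measurable fun p : ℝ × ℝ × ↥S2 × ↥S2 =>
      F (p.1 • (p.2.2.1 : E3) + p.2.1 • (p.2.2.2 : E3)) :=
    hF.comp (by fun_prop)
  have m2 : ∀ ξ₁ : ℝ, Measurable fun q : ℝ × ↥S2 × ↥S2 =>
      F (ξ₁ • (q.2.1 : E3) + q.1 • (q.2.2 : E3)) := fun ξ₁ => hF.comp (by fun_prop)
  have m3 : ∀ ξ₁ ξ₂ : ℝ, Measurable fun w : ↥S2 × ↥S2 =>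
      F (ξ₁ • (w.1 : E3) + ξ₂ • (w.2 : E3)) := fun ξ₁ ξ₂ => hF.comp (by fun_prop)
  have m4 : ∀ x : E3, Measurable fun z : E3 => F (x + z) := fun x =>
    hF.comp (measurable_const.add measurable_id)
  have inner2 : ∀ x : E3,
      (∫⁻ ω₂ : ↥S2, ∫⁻ ξ₂ : ℝ, F (x + ξ₂ • (ω₂ : E3)) ∂expMeasure ∂uniSphere)
      = (sphereVol Set.univ)⁻¹ * ∫⁻ y, F (x + y) * wt y ∂volume :=
    fun x => key _ (m4 x)
  have hHm : Measurable fun x : E3 => ∫⁻ y, F (x + y) * wt y ∂volume := by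
    have h : Measurable fun q : E3 × E3 => F (q.1 + q.2) * wt q.2 :=
      (hF.comp measurable_add).mul (wt_measurable.comp measurable_snd)
    exact h.lintegral_prod_right'
  calc ∫⁻ p : ℝ × ℝ × ↥S2 × ↥S2, F (p.1 • (p.2.2.1 : E3) + p.2.1 • (p.2.2.2 : E3)) ∂jointLaw
      = ∫⁻ ξ₁ : ℝ, ∫⁻ q : ℝ × ↥S2 × ↥S2,
          F (ξ₁ • (q.2.1 : E3) + q.1 • (q.2.2 : E3))
          ∂(expMeasure.prod (uniSphere.prod uniSphere)) ∂expMeasure := by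
        rw [jointLaw, lintegral_prod _ m1.aemeasurable]
    _ = ∫⁻ ξ₁ : ℝ, ∫⁻ ξ₂ : ℝ, ∫⁻ w : ↥S2 × ↥S2,
          F (ξ₁ • (w.1 : E3) + ξ₂ • (w.2 : E3)) ∂(uniSphere.prod uniSphere)
          ∂expMeasure ∂expMeasure := by
        refine lintegral_congr fun ξ₁ => ?_
        rw [lintegral_prod _ (m2 ξ₁).aemeasurable]
    _ = ∫⁻ ξ₁ : ℝ, ∫⁻ ξ₂ : ℝ, ∫⁻ ω₁ : ↥S2, ∫⁻ ω₂ : ↥S2,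
          F (ξ₁ • (ω₁ : E3) + ξ₂ • (ω₂ : E3)) ∂uniSphere ∂uniSphere
          ∂expMeasure ∂expMeasure := by
        refine lintegral_congr fun ξ₁ => lintegral_congr fun ξ₂ => ?_
        rw [lintegral_prod _ (m3 ξ₁ ξ₂).aemeasurable]
    _ = ∫⁻ ξ₁ : ℝ, ∫⁻ ω₁ : ↥S2, ∫⁻ ξ₂ : ℝ, ∫⁻ ω₂ : ↥S2,
          F (ξ₁ • (ω₁ : E3) + ξ₂ • (ω₂ : E3)) ∂uniSphere ∂expMeasure
          ∂uniSphere ∂expMeasure := by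
        refine lintegral_congr fun ξ₁ => ?_
        refine lintegral_lintegral_swap ?_
        have h : Measurable fun u : (ℝ × ↥S2) × ↥S2 =>
            F (ξ₁ • (u.1.2 : E3) + u.1.1 • (u.2 : E3)) := hF.comp (by fun_prop)
        exact h.lintegral_prod_right'.aemeasurable
    _ = ∫⁻ ω₁ : ↥S2, ∫⁻ ξ₁ : ℝ, ∫⁻ ξ₂ : ℝ, ∫⁻ ω₂ : ↥S2,
          F (ξ₁ • (ω₁ : E3) + ξ₂ • (ω₂ : E3)) ∂uniSphere ∂expMeasure
          ∂expMeasure ∂uniSphere := by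
        refine lintegral_lintegral_swap ?_
        have h0 : Measurable fun u : ((ℝ × ↥S2) × ℝ) × ↥S2 =>
            F (u.1.1.1 • (u.1.1.2 : E3) + u.1.2 • (u.2 : E3)) := hF.comp (by fun_prop)
        have h1 : Measurable fun u : (ℝ × ↥S2) × ℝ =>
            ∫⁻ ω₂ : ↥S2, F (u.1.1 • (u.1.2 : E3) + u.2 • (ω₂ : E3)) ∂uniSphere :=
          h0.lintegral_prod_right'
        exact h1.lintegral_prod_right'.aemeasurable
    _ = ∫⁻ ω₁ : ↥S2, ∫⁻ ξ₁ : ℝ, ∫⁻ ω₂ : ↥S2, ∫⁻ ξ₂ : ℝ,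
          F (ξ₁ • (ω₁ : E3) + ξ₂ • (ω₂ : E3)) ∂expMeasure ∂uniSphere
          ∂expMeasure ∂uniSphere := by
        refine lintegral_congr fun ω₁ => lintegral_congr fun ξ₁ => ?_
        refine lintegral_lintegral_swap ?_
        have h : Measurable fun u : ℝ × ↥S2 =>
            F (ξ₁ • (ω₁ : E3) + u.1 • (u.2 : E3)) := hF.comp (by fun_prop)
        exact h.aemeasurable
    _ = ∫⁻ ω₁ : ↥S2, ∫⁻ ξ₁ : ℝ,
          (sphereVol Set.univ)⁻¹ * ∫⁻ y, F (ξ₁ • (ω₁ : E3) + y) * wt y ∂volume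
          ∂expMeasure ∂uniSphere := by
        exact lintegral_congr fun ω₁ => lintegral_congr fun ξ₁ => inner2 (ξ₁ • (ω₁ : E3))
    _ = (sphereVol Set.univ)⁻¹ * ∫⁻ ω₁ : ↥S2, ∫⁻ ξ₁ : ℝ,
          (∫⁻ y, F (ξ₁ • (ω₁ : E3) + y) * wt y ∂volume) ∂expMeasure ∂uniSphere := by
        rw [← lintegral_const_mul' _ _ hAinv]
        exact lintegral_congr fun ω₁ => lintegral_const_mul' _ _ hAinv
    _ = (sphereVol Set.univ)⁻¹ * ((sphereVol Set.univ)⁻¹ *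
          ∫⁻ x, (∫⁻ y, F (x + y) * wt y ∂volume) * wt x ∂volume) := by
        congr 1
        exact key _ hHm


lemma exp_ge_third {u : ℝ} (hu : u ≤ 1) : (1:ℝ)/3 ≤ Real.exp (-u) := by
  have h2 : Real.exp u ≤ 3 :=
    le_of_lt (lt_of_le_of_lt (Real.exp_le_exp.2 hu)
      (lt_trans Real.exp_one_lt_d9 (by norm_num)))
  rw [Real.exp_neg, one_div]
  exact inv_anti₀ (Real.exp_pos u) h2

lemma inner_bound {ε : ℝ} (hε : 0 < ε) {x : E3} (hx : ‖x‖ ∈ Set.Icc ε (1/3:ℝ)) :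
    ENNReal.ofReal (7 * ε^2 / (108 * ‖x‖)) * V
      ≤ ∫⁻ y, ENNReal.ofReal (min 1 (ε^2 / ‖x + y‖^2)) * wt y ∂volume := by
  have hts : ε ≤ ‖x‖ := hx.1
  have htb : ‖x‖ ≤ 1/3 := hx.2
  have ht0 : 0 < ‖x‖ := lt_of_lt_of_le hε hts
  set t : ℝ := ‖x‖ with ht
  set D : Set E3 := {z : E3 | ‖z‖ ∈ Set.Icc t (2*t)} with hD
  set S : Set E3 := ((fun y => x + y) ⁻¹' D) \ {0} with hS
  have hDm : MeasurableSet D := measurable_norm measurableSet_Icc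
  have hSm : MeasurableSet S :=
    ((measurable_id.const_add x) hDm).diff (measurableSet_singleton 0)
  -- volume of S
  have hDball : D = Metric.closedBall (0:E3) (2*t) \ Metric.ball (0:E3) t := by
    ext z
    simp only [hD, Set.mem_setOf_eq, Set.mem_Icc, Set.mem_diff, mem_closedBall_zero_iff,
      mem_ball_zero_iff, not_lt]
    exact and_comm
  have hvolD : volume D = ENNReal.ofReal (7 * t^3) * V := by
    rw [hDball, measure_diff
        (fun z hz => mem_closedBall_zero_iff.2
          (le_trans (le_of_lt (mem_ball_zero_iff.1 hz)) (by linarith)))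
        measurableSet_ball.nullMeasurableSet measure_ball_lt_top.ne,
      Measure.addHaar_closedBall volume 0 (by positivity : (0:ℝ) ≤ 2*t),
      Measure.addHaar_ball volume 0 ht0.le, finrank_E3]
    have h8 : ENNReal.ofReal ((2*t)^3) = ENNReal.ofReal (7*t^3) + ENNReal.ofReal (t^3) := by
      rw [← ENNReal.ofReal_add (by positivity) (by positivity)]
      congr 1
      ring
    rw [show (volume : Measure E3) (Metric.ball 0 1) = V from rfl, h8, add_mul,
      ENNReal.add_sub_cancel_right (ENNReal.mul_ne_top ENNReal.ofReal_ne_top V_ne_top)]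
  have hvolS : volume S = ENNReal.ofReal (7 * t^3) * V := by
    rw [hS, measure_diff_null (measure_singleton 0), measure_preimage_add volume x D, hvolD]
  -- pointwise bound on S
  have hpt : ∀ y ∈ S,
      ENNReal.ofReal (ε^2/(4*t^2)) * ENNReal.ofReal (1/(27*t^2))
        ≤ ENNReal.ofReal (min 1 (ε^2 / ‖x + y‖^2)) * wt y := by
    intro y hy
    obtain ⟨hyD, hy0⟩ := hy
    have hy0' : y ≠ 0 := fun h => hy0 (by simp [h])
    have hxy : ‖x + y‖ ∈ Set.Icc t (2*t) := hyD
    have hxy1 : t ≤ ‖x + y‖ := hxy.1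
    have hxy2 : ‖x + y‖ ≤ 2*t := hxy.2
    have hxy0 : 0 < ‖x + y‖ := lt_of_lt_of_le ht0 hxy1
    refine mul_le_mul' (ENNReal.ofReal_le_ofReal ?_) (ENNReal.ofReal_le_ofReal ?_)

    · refine le_min ?_ ?_
      · rw [div_le_one (by positivity)]
        nlinarith
      · apply div_le_div_of_nonneg_left (by positivity) (by positivity)
        nlinarith
    ·
      have hny : ‖y‖ ≤ 3*t := by
        have h1 : ‖y‖ = ‖(x + y) - x‖ := by rw [add_sub_cancel_left]
        rw [h1]
        calc ‖(x + y) - x‖ ≤ ‖x + y‖ + ‖x‖ := norm_sub_le _ _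
          _ ≤ 2*t + t := add_le_add hxy2 le_rfl
          _ = 3*t := by ring
      have hny0 : 0 < ‖y‖ := norm_pos_iff.2 hy0'
      have hexp : (1:ℝ)/3 ≤ Real.exp (-‖y‖) := exp_ge_third (by linarith)
      show (1:ℝ)/(27*t^2) ≤ Real.exp (-‖y‖) / ‖y‖^2
      have h9 : ‖y‖^2 ≤ 9*t^2 := by nlinarith
      have heq : (1:ℝ)/(27*t^2) = (1/3)/(9*t^2) := by ring
      rw [heq]
      exact div_le_div₀ (Real.exp_pos _).le hexp (by positivity) h9
  calc ENNReal.ofReal (7 * ε^2 / (108 * t)) * V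
      = (ENNReal.ofReal (ε^2/(4*t^2)) * ENNReal.ofReal (1/(27*t^2))) * volume S := by
        rw [hvolS, ← ENNReal.ofReal_mul (by positivity), ← mul_assoc,
          ← ENNReal.ofReal_mul (by positivity)]
        congr 2
        field_simp
        ring
    _ ≤ ∫⁻ y in S, ENNReal.ofReal (min 1 (ε^2 / ‖x + y‖^2)) * wt y ∂volume := by
        rw [← setLIntegral_const S
          (ENNReal.ofReal (ε^2/(4*t^2)) * ENNReal.ofReal (1/(27*t^2)))]
        refine lintegral_mono_ae ?_
        filter_upwards [ae_restrict_mem hSm] with y hy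
        exact hpt y hy
    _ ≤ ∫⁻ y, ENNReal.ofReal (min 1 (ε^2 / ‖x + y‖^2)) * wt y ∂volume :=
        setLIntegral_le_lintegral _ _

end Reco

open Reco


section
open Reco Metric ENNReal

/-- For two independent Markovian flights `Y₁ = ξ₁·ω₁`, `Y₂ = ξ₂·ω₂`
there exist `c > 0` and `ε₀ ∈ (0,1)` such that for all `0 < ε < ε₀`,
`E[min(1, ε²/‖Y₁+Y₂‖²)] ≥ c·ε²·|log ε|`. -/
theorem indirect_recollision_lower_bound :
    ∃ c : ℝ, 0 < c ∧ ∃ ε₀ : ℝ, 0 < ε₀ ∧ ε₀ < 1 ∧ ∀ ε : ℝ, 0 < ε → ε < ε₀ →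
      c * ε ^ 2 * |Real.log ε| ≤
        ∫ p : ℝ × ℝ × ↥S2 × ↥S2,
          min 1 (ε ^ 2 / ‖p.1 • (p.2.2.1 : E3) + p.2.1 • (p.2.2.2 : E3)‖ ^ 2) ∂jointLaw := by
  refine ⟨1/300, by norm_num, 1/9, by norm_num, by norm_num, fun ε hε hε9 => ?_⟩
  have hε3 : ε ≤ 1/3 := by linarith
  have hε1 : ε < 1 := by linarith
  -- measurability of the integrand
  have hmA : Measurable fun p : ℝ × ℝ × ↥S2 × ↥S2 =>
      min 1 (ε^2 / ‖p.1 • (p.2.2.1 : E3) + p.2.1 • (p.2.2.2 : E3)‖^2) := by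
    refine measurable_const.min (measurable_const.div ?_)
    have hvec : Measurable fun p : ℝ × ℝ × ↥S2 × ↥S2 =>
        p.1 • (p.2.2.1 : E3) + p.2.1 • (p.2.2.2 : E3) := by fun_prop
    exact hvec.norm.pow_const 2
  have hnn : 0 ≤ᵐ[jointLaw] fun p : ℝ × ℝ × ↥S2 × ↥S2 =>
      min 1 (ε^2 / ‖p.1 • (p.2.2.1 : E3) + p.2.1 • (p.2.2.2 : E3)‖^2) :=
    Filter.Eventually.of_forall fun p => le_min zero_le_one (by positivity)
  rw [integral_eq_lintegral_of_nonneg_ae hnn hmA.aestronglyMeasurable]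
  have hF : Measurable fun z : E3 => ENNReal.ofReal (min 1 (ε^2 / ‖z‖^2)) :=
    (measurable_const.min (measurable_const.div (measurable_norm.pow_const 2))).ennreal_ofReal
  -- the reduction to a double space integral
  have hJ : (∫⁻ p : ℝ × ℝ × ↥S2 × ↥S2,
        ENNReal.ofReal (min 1
          (ε^2 / ‖p.1 • (p.2.2.1 : E3) + p.2.1 • (p.2.2.2 : E3)‖^2)) ∂jointLaw)
      = (sphereVol Set.univ)⁻¹ * ((sphereVol Set.univ)⁻¹ *
          ∫⁻ x, (∫⁻ y, ENNReal.ofReal (min 1 (ε^2 / ‖x + y‖^2)) * wt y ∂volume)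
            * wt x ∂volume) :=
    reduction _ hF
  -- upper bound : the lintegral is ≤ 1
  have hJle : (∫⁻ p : ℝ × ℝ × ↥S2 × ↥S2,
      ENNReal.ofReal (min 1
        (ε^2 / ‖p.1 • (p.2.2.1 : E3) + p.2.1 • (p.2.2.2 : E3)‖^2)) ∂jointLaw) ≤ 1 := by
    calc (∫⁻ p : ℝ × ℝ × ↥S2 × ↥S2,
        ENNReal.ofReal (min 1
          (ε^2 / ‖p.1 • (p.2.2.1 : E3) + p.2.1 • (p.2.2.2 : E3)‖^2)) ∂jointLaw)
        ≤ ∫⁻ _ : ℝ × ℝ × ↥S2 × ↥S2, 1 ∂jointLaw :=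
          lintegral_mono fun p => ENNReal.ofReal_le_one.2 (min_le_left _ _)
      _ = 1 := by rw [lintegral_one, measure_univ]
  have hJne : (∫⁻ p : ℝ × ℝ × ↥S2 × ↥S2,
      ENNReal.ofReal (min 1
        (ε^2 / ‖p.1 • (p.2.2.1 : E3) + p.2.1 • (p.2.2.2 : E3)‖^2)) ∂jointLaw) ≠ ∞ :=
    ne_top_of_le_ne_top ENNReal.one_ne_top hJle
  -- the outer space-integral lower bound
  set K : ℝ := (7*ε^2/324) * (Real.log (1/3) - Real.log ε) with hKdef
  have hlogle : Real.log ε ≤ Real.log (1/3) := Real.log_le_log hε (by linarith)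
  have hK0 : 0 ≤ K := by
    apply mul_nonneg (by positivity)
    linarith
  have hshellm : MeasurableSet {x : E3 | ‖x‖ ∈ Set.Icc ε (1/3:ℝ)} :=
    measurable_norm measurableSet_Icc
  have houter : sphereVol Set.univ * ENNReal.ofReal K * V
      ≤ ∫⁻ x, (∫⁻ y, ENNReal.ofReal (min 1 (ε^2 / ‖x + y‖^2)) * wt y ∂volume)
          * wt x ∂volume := by
    calc sphereVol Set.univ * ENNReal.ofReal K * V
        = (∫⁻ x in {x : E3 | ‖x‖ ∈ Set.Icc ε (1/3:ℝ)},
            ENNReal.ofReal ((7*ε^2/324) / ‖x‖^3) ∂volume) * V := by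
          rw [shell_int (by positivity) hε hε3]
      _ = ∫⁻ x in {x : E3 | ‖x‖ ∈ Set.Icc ε (1/3:ℝ)},
            ENNReal.ofReal ((7*ε^2/324) / ‖x‖^3) * V ∂volume := by
          rw [lintegral_mul_const' V _ V_ne_top]
      _ ≤ ∫⁻ x in {x : E3 | ‖x‖ ∈ Set.Icc ε (1/3:ℝ)},
            (∫⁻ y, ENNReal.ofReal (min 1 (ε^2 / ‖x + y‖^2)) * wt y ∂volume)
              * wt x ∂volume := by
          refine lintegral_mono_ae ?_
          filter_upwards [ae_restrict_mem hshellm] with x hx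
          have ht0 : 0 < ‖x‖ := lt_of_lt_of_le hε hx.1
          have h1 : ENNReal.ofReal (7*ε^2/(108*‖x‖)) * V
              ≤ ∫⁻ y, ENNReal.ofReal (min 1 (ε^2 / ‖x + y‖^2)) * wt y ∂volume :=
            inner_bound hε hx
          have h2 : ENNReal.ofReal (1/(3*‖x‖^2)) ≤ wt x := by
            show ENNReal.ofReal (1/(3*‖x‖^2))
              ≤ ENNReal.ofReal (Real.exp (-‖x‖) / ‖x‖^2)
            apply ENNReal.ofReal_le_ofReal
            have hexp : (1:ℝ)/3 ≤ Real.exp (-‖x‖) :=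
              exp_ge_third (le_trans hx.2 (by norm_num))
            have heq : (1:ℝ)/(3*‖x‖^2) = (1/3)/(‖x‖^2) := by ring
            rw [heq]
            exact div_le_div₀ (Real.exp_pos _).le hexp (by positivity) le_rfl
          calc ENNReal.ofReal ((7*ε^2/324) / ‖x‖^3) * V
              = (ENNReal.ofReal (7*ε^2/(108*‖x‖)) * V) * ENNReal.ofReal (1/(3*‖x‖^2)) := by
                rw [mul_right_comm, ← ENNReal.ofReal_mul (by positivity)]
                congr 2
                field_simp
                ring
            _ ≤ (∫⁻ y, ENNReal.ofReal (min 1 (ε^2 / ‖x + y‖^2)) * wt y ∂volume) * wt x :=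
                mul_le_mul' h1 h2
      _ ≤ ∫⁻ x, (∫⁻ y, ENNReal.ofReal (min 1 (ε^2 / ‖x + y‖^2)) * wt y ∂volume)
            * wt x ∂volume := setLIntegral_le_lintegral _ _
  -- algebraic simplification of the constants
  have halg : (sphereVol Set.univ)⁻¹ * ((sphereVol Set.univ)⁻¹ *
      (sphereVol Set.univ * ENNReal.ofReal K * V)) = 3⁻¹ * ENNReal.ofReal K := by
    have hr : (sphereVol Set.univ)⁻¹ * ((sphereVol Set.univ)⁻¹ *
        (sphereVol Set.univ * ENNReal.ofReal K * V))
        = ((sphereVol Set.univ)⁻¹ * sphereVol Set.univ) *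
            (((sphereVol Set.univ)⁻¹ * V) * ENNReal.ofReal K) := by ring
    rw [hr, ENNReal.inv_mul_cancel A_ne_zero A_ne_top, one_mul]
    have hAV : (sphereVol Set.univ)⁻¹ * V = 3⁻¹ := by
      rw [A_eq, ENNReal.mul_inv (Or.inl (by norm_num)) (Or.inl (by norm_num)), mul_assoc,
        ENNReal.inv_mul_cancel V_ne_zero V_ne_top, mul_one]
    rw [hAV]
  have hchain : 3⁻¹ * ENNReal.ofReal K
      ≤ ∫⁻ p : ℝ × ℝ × ↥S2 × ↥S2,
          ENNReal.ofReal (min 1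
            (ε^2 / ‖p.1 • (p.2.2.1 : E3) + p.2.1 • (p.2.2.2 : E3)‖^2)) ∂jointLaw := by
    rw [hJ, ← halg]
    exact mul_le_mul_right (mul_le_mul_right houter _) _
  -- the real-number comparison
  have hlogneg : Real.log ε < 0 := Real.log_neg hε hε1
  have hreal : (1:ℝ)/300 * ε^2 * |Real.log ε| ≤ (1/3) * K := by
    rw [abs_of_neg hlogneg, hKdef]
    have hl9 : Real.log ε < Real.log (1/9 : ℝ) := Real.log_lt_log hε hε9
    have h19 : Real.log (1/9 : ℝ) = -(2 * Real.log 3) := by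
      rw [one_div, Real.log_inv, show (9:ℝ) = 3^2 by norm_num, Real.log_pow]
      push_cast
      ring
    have h13 : Real.log (1/3 : ℝ) = -Real.log 3 := by rw [one_div, Real.log_inv]
    have h3pos : 0 < Real.log 3 := Real.log_pos (by norm_num)
    rw [h13]
    have hL : 2 * Real.log 3 ≤ -Real.log ε := by
      rw [h19] at hl9
      linarith
    have hkey : (1:ℝ)/300 * (-Real.log ε)
        ≤ (7/972) * ((-Real.log ε) - Real.log 3) := by linarith
    nlinarith [mul_le_mul_of_nonneg_left hkey (sq_nonneg ε)]
  have hof : ENNReal.ofReal ((1:ℝ)/300 * ε^2 * |Real.log ε|) ≤ 3⁻¹ * ENNReal.ofReal K := by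
    calc ENNReal.ofReal ((1:ℝ)/300 * ε^2 * |Real.log ε|)
        ≤ ENNReal.ofReal ((1/3) * K) := ENNReal.ofReal_le_ofReal hreal
      _ = ENNReal.ofReal (1/3) * ENNReal.ofReal K := ENNReal.ofReal_mul (by norm_num)
      _ = 3⁻¹ * ENNReal.ofReal K := by
          congr 1
          rw [show (1:ℝ)/3 = (3:ℝ)⁻¹ from by norm_num,
            ENNReal.ofReal_inv_of_pos (by norm_num)]
          norm_num
  have hfinal := ENNReal.toReal_mono hJne (le_trans hof hchain)
  rwa [ENNReal.toReal_ofReal (by positivity)] at hfinal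

end
end
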